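/- Let m > 0 be an even integer and L = ⌈log₂ m⌉. If there exists a classical deterministic winning strategy for the matching game for m, then there exist a simple graph G = (V, E) on m vertices and a function h : E → {0,1} such that the number of distinct colourings of G according to h is at least 2^{m−L} and G contains a connected component of cardinality greater than m/2. -/

import Mathlib

/-- The `k`-th bit (big-endian, most significant first) of the `L`-bit binary
representation of `b`, viewed as an element of `ZMod 2`. -/
def binRep (L b : ℕ) (k : Fin L) : ZMod 2 :=
  if Nat.testBit b (L - 1 - k.val) then 1 else 0

/-- A perfect matching on `{0, …, m-1}`, encoded as a fixed-point-free
involution `y : Fin m → Fin m`. -/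
def Matching (m : ℕ) : Type :=
  {y : Fin m → Fin m // y ∘ y = id ∧ ∀ i, y i ≠ i}

/-!
Every pair that Bob announces is an edge of the graph `G` of all his possible answers. When
Alice sends the same message on `x` and `x'`, the winning condition gives `x` and `x'` the same
parity across each such edge, so every fibre of `s_A` consists of colourings of `G` for a single
`h`, and some fibre has at least `2^(m-L)` elements. If every component of `G` had at most `m/2`
vertices, listing the vertices component by component and pairing the `i`-th with the
`(i + m/2)`-th would give a perfect matching none of whose pairs is an edge of `G`, although Bob
has to answer it with one.
-/

def swapHalves (k : ℕ) : Equiv.Perm (Fin (k + k)) :=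
  finSumFinEquiv.symm.trans ((Equiv.sumComm _ _).trans finSumFinEquiv)

@[simp] theorem swapHalves_castAdd (k : ℕ) (j : Fin k) :
    swapHalves k (Fin.castAdd k j) = Fin.natAdd k j := by
  simp [swapHalves]

@[simp] theorem swapHalves_natAdd (k : ℕ) (j : Fin k) :
    swapHalves k (Fin.natAdd k j) = Fin.castAdd k j := by
  simp only [swapHalves, Equiv.trans_apply, finSumFinEquiv_symm_apply_natAdd]
  simp

theorem swapHalves_involutive (k : ℕ) : Function.Involutive (swapHalves k) := by
  intro i
  induction i using Fin.addCases <;> simp only [swapHalves_castAdd, swapHalves_natAdd]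

theorem Monotone.apply_castAdd_ne_apply_natAdd {β : Type*} [PartialOrder β] {k : ℕ}
    {g : Fin (k + k) → β} (hg : Monotone g) (hfib : ∀ b, (g ⁻¹' {b}).ncard ≤ k) (j : Fin k) :
    g (Fin.castAdd k j) ≠ g (Fin.natAdd k j) := by
  intro heq
  have hsub : Set.Icc (Fin.castAdd k j) (Fin.natAdd k j) ⊆ g ⁻¹' {g (Fin.castAdd k j)} :=
    fun r hr => le_antisymm (heq ▸ hg hr.2) (hg hr.1)
  have hcard : (Set.Icc (Fin.castAdd k j) (Fin.natAdd k j)).ncard = k + 1 := by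
    rw [Set.ncard_eq_toFinset_card', Set.toFinset_Icc, Fin.card_Icc, Fin.val_natAdd,
      Fin.val_castAdd]
    omega
  have := (Set.ncard_le_ncard hsub).trans (hfib _)
  omega

theorem exists_involutive_apply_ne {V β : Type*} [Fintype V] {k : ℕ}
    (hV : Fintype.card V = k + k) (f : V → β) (hf : ∀ b, (f ⁻¹' {b}).ncard ≤ k) :
    ∃ y : V → V, Function.Involutive y ∧ ∀ v, f (y v) ≠ f v := by
  classical
  -- any linear order on `β` will do: it only serves to list `V` sorted by the value of `f`
  let : LinearOrder β := linearOrderOfSTO WellOrderingRel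
  let e := Fintype.equivFinOfCardEq hV
  let τ : Fin (k + k) ≃ V := (Tuple.sort (f ∘ e.symm)).trans e.symm
  have hmono : Monotone (f ∘ τ) := Tuple.monotone_sort (f ∘ e.symm)
  have hfib : ∀ b, ((f ∘ τ) ⁻¹' {b}).ncard ≤ k := fun b => by
    rw [Set.preimage_comp, Set.ncard_preimage_of_injective_subset_range τ.injective (by simp)]
    exact hf b
  refine ⟨τ ∘ swapHalves k ∘ τ.symm, fun v => by simp [swapHalves_involutive k _], ?_⟩
  intro v
  obtain ⟨i, rfl⟩ := τ.surjective v
  induction i using Fin.addCases with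
  | left j =>
    simpa only [Function.comp_apply, Equiv.symm_apply_apply, swapHalves_castAdd] using
      (hmono.apply_castAdd_ne_apply_natAdd hfib j).symm
  | right j =>
    simpa only [Function.comp_apply, Equiv.symm_apply_apply, swapHalves_natAdd] using
      hmono.apply_castAdd_ne_apply_natAdd hfib j

theorem exists_lt_ncard_supp_of_forall_matching {m : ℕ} (hm : Even m) (G : SimpleGraph (Fin m))
    (hG : ∀ y : Matching m, ∃ i, G.Adj i (y.val i)) :
    ∃ C : G.ConnectedComponent, m / 2 < C.supp.ncard := by
  by_contra! hsmall
  obtain ⟨k, rfl⟩ := hm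
  obtain ⟨y, hinv, hne⟩ := exists_involutive_apply_ne (Fintype.card_fin _) G.connectedComponentMk
    fun C => (hsmall C).trans (by omega)
  obtain ⟨i, hi⟩ := hG ⟨y, hinv.comp_self, fun i h => hne i (congrArg _ h)⟩
  exact hne i (SimpleGraph.ConnectedComponent.connectedComponentMk_eq_of_adj hi).symm

def colourings {V R : Type*} [Add R] (G : SimpleGraph V) (h : G.edgeSet → R) : Set (V → R) :=
  {c | ∀ e : G.edgeSet, ∀ u v : V, e.val = s(u, v) → c u + c v = h e}

def edgeSum {V R : Type*} [AddCommMagma R] (G : SimpleGraph V) (c : V → R) : G.edgeSet → R :=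
  fun e => Sym2.lift ⟨fun u v => c u + c v, fun _ _ => add_comm _ _⟩ e.val

theorem mem_colourings_edgeSum_iff {V R : Type*} [AddCommMagma R] {G : SimpleGraph V}
    {c c₀ : V → R} :
    c ∈ colourings G (edgeSum G c₀) ↔ ∀ u v, G.Adj u v → c u + c v = c₀ u + c₀ v := by
  constructor
  · intro hc u v huv
    exact hc ⟨s(u, v), huv⟩ u v rfl
  · rintro hc ⟨e, he⟩ u v rfl
    exact hc u v he

theorem exists_card_pow_le_ncard_fiber {R : Type*} [Fintype R] [Nonempty R] {m L : ℕ}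
    (hL : L ≤ m) (f : (Fin m → R) → (Fin L → R)) :
    ∃ a, Fintype.card R ^ (m - L) ≤ (f ⁻¹' {a}).ncard := by
  classical
  have hcard : Fintype.card (Fin L → R) * Fintype.card R ^ (m - L) ≤
      Fintype.card (Fin m → R) := by
    simp only [Fintype.card_fun, Fintype.card_fin, ← pow_add, Nat.add_sub_cancel' hL, le_refl]
  obtain ⟨a, ha⟩ := Fintype.exists_le_card_fiber_of_mul_le_card f hcard
  refine ⟨a, ha.trans_eq ?_⟩
  rw [← Set.ncard_coe_finset]
  congr 1
  ext x
  simp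

def strategyGraph {m : ℕ} {T : Type*} (sB : Matching m → Fin m × Fin m × T) :
    SimpleGraph (Fin m) :=
  SimpleGraph.fromEdgeSet (Set.range fun y => s((sB y).1, (sB y).2.1))

def IsWinningStrategy {m : ℕ} (sA : (Fin m → ZMod 2) → (Fin (Nat.clog 2 m) → ZMod 2))
    (sB : Matching m → Fin m × Fin m × (Fin (Nat.clog 2 m) → ZMod 2)) : Prop :=
  ∀ y : Matching m,
    y.val (sB y).1 = (sB y).2.1 ∧
    ∀ x : Fin m → ZMod 2,
      x (sB y).1 + x (sB y).2.1 =
        ∑ k : Fin (Nat.clog 2 m),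
          (binRep (Nat.clog 2 m) ((sB y).1).val k +
            binRep (Nat.clog 2 m) ((sB y).2.1).val k) *
            (sA x k + (sB y).2.2 k)

namespace IsWinningStrategy

variable {m : ℕ} {sA : (Fin m → ZMod 2) → (Fin (Nat.clog 2 m) → ZMod 2)}
  {sB : Matching m → Fin m × Fin m × (Fin (Nat.clog 2 m) → ZMod 2)}

theorem adj (hwin : IsWinningStrategy sA sB) (y : Matching m) :
    (strategyGraph sB).Adj (sB y).1 (y.val (sB y).1) := by
  rw [strategyGraph, SimpleGraph.fromEdgeSet_adj, (hwin y).1]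
  exact ⟨⟨y, rfl⟩, fun h => y.2.2 _ (((hwin y).1).trans h.symm)⟩

theorem add_eq_add_of_eq (hwin : IsWinningStrategy sA sB) (y : Matching m)
    {x x' : Fin m → ZMod 2} (hx : sA x = sA x') :
    x (sB y).1 + x (sB y).2.1 = x' (sB y).1 + x' (sB y).2.1 := by
  rw [(hwin y).2 x, (hwin y).2 x', hx]

theorem fiber_subset_colourings (hwin : IsWinningStrategy sA sB) (c₀ : Fin m → ZMod 2) :
    sA ⁻¹' {sA c₀} ⊆ colourings (strategyGraph sB) (edgeSum _ c₀) := by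
  intro x hx
  rw [mem_colourings_edgeSum_iff]
  rintro _ _ ⟨⟨y, hy⟩, -⟩
  rcases Sym2.eq_iff.mp hy with ⟨rfl, rfl⟩ | ⟨rfl, rfl⟩
  · exact hwin.add_eq_add_of_eq y hx
  · rw [add_comm (x _), add_comm (c₀ _)]
    exact hwin.add_eq_add_of_eq y hx

end IsWinningStrategy

theorem winning_strategy_gives_graph_and_colourings_general (m : ℕ)
    (hme : Even m)
    (hstrat : ∃ (sA : (Fin m → ZMod 2) → (Fin (Nat.clog 2 m) → ZMod 2))
        (sB : Matching m → Fin m × Fin m × (Fin (Nat.clog 2 m) → ZMod 2)),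
        ∀ y : Matching m,
          y.val (sB y).1 = (sB y).2.1 ∧
          ∀ x : Fin m → ZMod 2,
            x (sB y).1 + x (sB y).2.1 =
              ∑ k : Fin (Nat.clog 2 m),
                (binRep (Nat.clog 2 m) ((sB y).1).val k +
                  binRep (Nat.clog 2 m) ((sB y).2.1).val k) *
                  (sA x k + (sB y).2.2 k)) :
    ∃ (G : SimpleGraph (Fin m)) (h : G.edgeSet → ZMod 2),
      2 ^ (m - Nat.clog 2 m) ≤
        {c : Fin m → ZMod 2 |
          ∀ e : G.edgeSet, ∀ u v : Fin m, e.val = s(u, v) → c u + c v = h e}.ncard ∧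
      ∃ comp : G.ConnectedComponent, m / 2 < comp.supp.ncard := by
  obtain ⟨sA, sB, hwin⟩ : ∃ sA sB, IsWinningStrategy sA sB := hstrat
  have hL : Nat.clog 2 m ≤ m := Nat.clog_le_of_le_pow Nat.lt_two_pow_self.le
  obtain ⟨a, ha⟩ := exists_card_pow_le_ncard_fiber (R := ZMod 2) hL sA
  rw [ZMod.card] at ha
  obtain ⟨c₀, rfl⟩ : ∃ c₀, sA c₀ = a :=
    Set.nonempty_of_ncard_ne_zero ((pow_pos two_pos _).trans_le ha).ne'
  refine ⟨strategyGraph sB, edgeSum _ c₀, ?_,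
    exists_lt_ncard_supp_of_forall_matching hme _ fun y => ⟨_, hwin.adj y⟩⟩
  exact ha.trans (Set.ncard_le_ncard (hwin.fiber_subset_colourings c₀))

/-- Let `m > 0` be even and `L = ⌈log₂ m⌉ = Nat.clog 2 m`.  If there exists a
classical deterministic winning strategy for the matching game for `m`, then
there exist a simple graph `G` on `m` vertices and a function `h : E → {0,1}`
such that the number of distinct colourings of `G` according to `h` (functions
`c : Fin m → ZMod 2` with `c u + c v = h {u, v}` for every edge; in `ZMod 2`,
`+` is XOR and `*` is AND) is at least `2^(m-L)` and `G` contains a connected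
component of cardinality greater than `m/2`. -/
theorem winning_strategy_gives_graph_and_colourings (m : ℕ) (hm : 0 < m)
    (hme : Even m)
    (hstrat : ∃ (sA : (Fin m → ZMod 2) → (Fin (Nat.clog 2 m) → ZMod 2))
        (sB : Matching m → Fin m × Fin m × (Fin (Nat.clog 2 m) → ZMod 2)),
        ∀ y : Matching m,
          y.val (sB y).1 = (sB y).2.1 ∧
          ∀ x : Fin m → ZMod 2,
            x (sB y).1 + x (sB y).2.1 =
              ∑ k : Fin (Nat.clog 2 m),
                (binRep (Nat.clog 2 m) ((sB y).1).val k +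
                  binRep (Nat.clog 2 m) ((sB y).2.1).val k) *
                  (sA x k + (sB y).2.2 k)) :
    ∃ (G : SimpleGraph (Fin m)) (h : G.edgeSet → ZMod 2),
      2 ^ (m - Nat.clog 2 m) ≤
        {c : Fin m → ZMod 2 |
          ∀ e : G.edgeSet, ∀ u v : Fin m, e.val = s(u, v) → c u + c v = h e}.ncard ∧
      ∃ comp : G.ConnectedComponent, m / 2 < comp.supp.ncard :=
  winning_strategy_gives_graph_and_colourings_general m hme hstrat
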